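/- In genus 0 with two marked points, the two-point series \hat{C}_{0,2}(w_1,w_2;\tau) = -\sum_{\alpha,\beta ≥ 1} ((\tau+1)/\tau) (1/(\alpha+\beta)) (\prod_{a=0}^{\alpha-1}(\alpha\tau+a)/\alpha!) (\prod_{a=0}^{\beta-1}(\beta\tau+a)/\beta!) x_1^{\alpha} x_2^{\beta} satisfies (x_1 ∂/∂x_1 + x_2 ∂/∂x_2) \hat{C}_{0,2} = -\tau(\tau+1) · (y_1 y_2)/((1-(\tau+1)y_1)(1-(\tau+1)y_2)), where y_i = y(x_i) is the solution of y(1-y)^\tau = x with y(0)=0. -/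

import Mathlib

open PowerSeries

noncomputable section

/-- `(1+u)^τ := ∑_n binom(τ,n) u^n`, the formal binomial power. -/
def binomPow {K : Type*} [Field K] (τ : K) (u : PowerSeries K) : PowerSeries K :=
  PowerSeries.mk fun m => ∑ n ∈ Finset.range (m + 1),
    ((∏ a ∈ Finset.range n, (τ - (a : K))) / (Nat.factorial n : K)) *
      PowerSeries.coeff (R := K) m (u ^ n)

/-- The coefficient `∏_{a=0}^{α-1}(ατ+a)/α!`. -/
def lambertCoeff (τ : RatFunc ℚ) (α : ℕ) : RatFunc ℚ :=
  (∏ a ∈ Finset.range α, ((α : RatFunc ℚ) * τ + (a : RatFunc ℚ))) /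
    (Nat.factorial α : RatFunc ℚ)

/-- The two-point genus-zero series
`Ĉ_{0,2} = -∑_{α,β ≥ 1} ((τ+1)/τ)(1/(α+β)) (∏(ατ+a)/α!)(∏(βτ+a)/β!) x_1^α x_2^β`. -/
def C02 (τ : RatFunc ℚ) : MvPowerSeries (Fin 2) (RatFunc ℚ) :=
  fun d =>
    if d 0 ≠ 0 ∧ d 1 ≠ 0 then
      -(((τ + 1) / τ) * (1 / ((d 0 + d 1 : ℕ) : RatFunc ℚ)) *
        lambertCoeff τ (d 0) * lambertCoeff τ (d 1))
    else 0

/-- The Euler operator `x_1 ∂/∂x_1 + x_2 ∂/∂x_2` on two-variable power series. -/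
def eulerOp (f : MvPowerSeries (Fin 2) (RatFunc ℚ)) : MvPowerSeries (Fin 2) (RatFunc ℚ) :=
  fun d => (((d 0 + d 1 : ℕ) : RatFunc ℚ)) * f d

/-- The one-variable power series `y(x_v)` placed in variable `v` of a two-variable ring. -/
def inVar (v : Fin 2) (y : PowerSeries (RatFunc ℚ)) : MvPowerSeries (Fin 2) (RatFunc ℚ) :=
  fun d => if ∀ w, w ≠ v → d w = 0 then PowerSeries.coeff (R := RatFunc ℚ) (d v) y else 0

/-!
Put `w = (1 - y) ^ τ`, so that `y = X / w`. Lagrange inversion gives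
`[X ^ n] w y' = [X ^ n] (1 - X) ^ (-n τ) = λ_n := ∏_{a < n} (n τ + a) / n!`, and differentiating `y w = X`
gives `w y' (1 - (τ + 1) y) = 1 - y`. Hence `∑_{n ≥ 1} λ_n X ^ n = τ y / (1 - (τ + 1) y)`.
The Euler operator cancels the factor `1 / (α + β)` of `Ĉ_{0,2}`, which turns it into
`-(τ + 1) / τ` times the product of this series in `x_1` and in `x_2`.
-/

namespace PowerSeries

section Subst

variable {R : Type*} [CommRing R]

lemma coeff_pow_of_lt {u : R⟦X⟧} (hu : constantCoeff u = 0) {p i : ℕ} (hpi : p < i) :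
    coeff p (u ^ i) = 0 :=
  coeff_of_lt_order _ ((Nat.cast_lt.2 hpi).trans_le (le_order_pow_of_constantCoeff_eq_zero i hu))

lemma coeff_subst_eq_sum_range {u : R⟦X⟧} (hu : constantCoeff u = 0) (f : R⟦X⟧) {p m : ℕ}
    (hpm : p ≤ m) :
    coeff p (f.subst u) = ∑ i ∈ Finset.range (m + 1), coeff i f * coeff p (u ^ i) := by
  rw [coeff_subst' (.of_constantCoeff_zero' hu), finsum_eq_sum_of_support_subset]
  · rfl
  intro i hi
  contrapose! hi
  simp only [Finset.coe_range, Set.mem_Iio, not_lt] at hi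
  simp [coeff_pow_of_lt hu (show p < i by omega)]

lemma coeff_subst_mul {u : R⟦X⟧} (hu : constantCoeff u = 0) (f g : R⟦X⟧) (m : ℕ) :
    coeff m (f.subst u * g) = ∑ i ∈ Finset.range (m + 1), coeff i f * coeff m (u ^ i * g) := by
  simp_rw [coeff_mul, Finset.mul_sum]
  rw [Finset.sum_comm]
  refine Finset.sum_congr rfl fun p hp => ?_
  rw [coeff_subst_eq_sum_range hu f (Finset.HasAntidiagonal.antidiagonal.fst_le hp),
    Finset.sum_mul]
  simp only [mul_assoc]

end Subst

section Lagrange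

variable {R : Type*} [CommRing R] [IsAddTorsionFree R] {y w : R⟦X⟧}

lemma coeff_pow_succ_mul_derivative (hy : constantCoeff y = 0) (hyw : y * w = X) (m : ℕ) :
    coeff m (w ^ (m + 1) * d⁄dX R y) = if m = 0 then 1 else 0 := by
  have hderiv : d⁄dX R y * w + y * d⁄dX R w = 1 := by
    have h := congrArg (d⁄dX R) hyw
    simp only [Derivation.leibniz, smul_eq_mul, derivative_X] at h
    linear_combination h
  rcases m with _ | s
  · have h := congrArg constantCoeff hderiv
    simp only [map_add, map_mul, hy, zero_mul, add_zero, map_one] at h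
    simpa [coeff_zero_eq_constantCoeff_apply, mul_comm] using h
  · have hsplit : w ^ (s + 2) * d⁄dX R y = w ^ (s + 1) - X * (w ^ s * d⁄dX R w) := by
      linear_combination w ^ (s + 1) * hderiv - w ^ s * d⁄dX R w * hyw
    have hpow : coeff s (w ^ s * d⁄dX R w) = coeff (s + 1) (w ^ (s + 1)) := by
      have h := coeff_derivative (w ^ (s + 1)) s
      rw [derivative_pow, Nat.add_sub_cancel, mul_assoc, ← nsmul_eq_mul, map_nsmul, ← Nat.cast_succ,
        mul_comm (coeff (s + 1) _), ← nsmul_eq_mul] at h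
      exact nsmul_right_injective (Nat.succ_ne_zero s) h
    simp [hsplit, hpow]

/-- Lagrange inversion for `y = X / w`. -/
theorem coeff_subst_mul_pow_succ_mul_derivative (hy : constantCoeff y = 0) (hyw : y * w = X)
    (f : R⟦X⟧) (n : ℕ) :
    coeff n (f.subst y * (w ^ (n + 1) * d⁄dX R y)) = coeff n f := by
  have hterm : ∀ i ∈ Finset.range (n + 1),
      coeff i f * coeff n (y ^ i * (w ^ (n + 1) * d⁄dX R y)) = if n = i then coeff i f else 0 := by
    intro i hi
    obtain ⟨k, rfl⟩ : ∃ k, n = i + k := ⟨n - i, by simp at hi; omega⟩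
    have hX : y ^ i * (w ^ (i + k + 1) * d⁄dX R y) = X ^ i * (w ^ (k + 1) * d⁄dX R y) := by
      rw [← hyw]; ring
    rw [hX, add_comm i k, coeff_X_pow_mul, coeff_pow_succ_mul_derivative hy hyw]
    simp
  rw [coeff_subst_mul hy, Finset.sum_congr rfl hterm, Finset.sum_ite_eq,
    if_pos (Finset.self_mem_range_succ n)]

end Lagrange

section Binomial

variable {K : Type*} [Field K] [CharZero K]

lemma _root_.Ring.choose_eq_prod_div (σ : K) (n : ℕ) :
    Ring.choose σ n = (∏ a ∈ Finset.range n, (σ - a)) / n.factorial := by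
  rw [Ring.choose_eq_smul, ← Polynomial.aeval_eq_smeval, Polynomial.aeval_def,
    ← Polynomial.eval_map, descPochhammer_map, descPochhammer_eval_eq_prod_range, smul_eq_mul,
    inv_mul_eq_div]

lemma derivative_binomialSeries (σ : K) :
    d⁄dX K (binomialSeries K σ) = C σ * binomialSeries K (σ - 1) := by
  ext n
  have h := Ring.choose_smul_choose σ (n := n + 1) (k := 1) (by omega)
  simp only [Nat.choose_one_right, Ring.choose_one_right, Nat.add_sub_cancel, Nat.cast_one] at h
  rw [coeff_derivative, coeff_C_mul, binomialSeries_coeff, binomialSeries_coeff, smul_eq_mul,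
    smul_eq_mul, mul_one, mul_one, ← h, nsmul_eq_mul, mul_comm]
  push_cast; ring

variable {u : K⟦X⟧}

lemma binomPow_eq_subst (σ : K) (hu : constantCoeff u = 0) :
    binomPow σ u = (binomialSeries K σ).subst u := by
  ext m
  rw [coeff_subst_eq_sum_range hu _ le_rfl, binomPow, coeff_mk]
  simp [Ring.choose_eq_prod_div]

lemma binomPow_add (σ ρ : K) (hu : constantCoeff u = 0) :
    binomPow (σ + ρ) u = binomPow σ u * binomPow ρ u := by
  simp only [binomPow_eq_subst _ hu, binomialSeries_add, subst_mul (.of_constantCoeff_zero' hu)]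

lemma binomPow_zero (hu : constantCoeff u = 0) : binomPow 0 u = 1 := by
  rw [binomPow_eq_subst _ hu, binomialSeries_zero, ← coe_substAlgHom (.of_constantCoeff_zero' hu),
    map_one]

lemma binomPow_one (hu : constantCoeff u = 0) : binomPow 1 u = 1 + u := by
  have hs : HasSubst u := .of_constantCoeff_zero' hu
  rw [binomPow_eq_subst _ hu, ← Nat.cast_one, binomialSeries_nat, pow_one, ← coe_substAlgHom hs,
    map_add, map_one, coe_substAlgHom hs, subst_X hs]

lemma binomPow_natCast_mul (n : ℕ) (σ : K) (hu : constantCoeff u = 0) :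
    binomPow (n * σ) u = binomPow σ u ^ n := by
  induction n with
  | zero => simp [binomPow_zero hu]
  | succ n ih => rw [Nat.cast_succ, add_one_mul, binomPow_add _ _ hu, ih, pow_succ]

lemma derivative_binomPow (σ : K) (hu : constantCoeff u = 0) :
    d⁄dX K (binomPow σ u) = C σ * binomPow (σ - 1) u * d⁄dX K u := by
  have hs : HasSubst u := .of_constantCoeff_zero' hu
  rw [binomPow_eq_subst _ hu, binomPow_eq_subst _ hu, derivative_subst hs,
    derivative_binomialSeries, subst_mul hs, subst_C]
  rfl

lemma binomPow_subst (σ : K) {y : K⟦X⟧} (hy : constantCoeff y = 0) :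
    binomPow σ (-y) = (binomPow σ (-X)).subst y := by
  have hs : HasSubst y := .of_constantCoeff_zero' hy
  rw [binomPow_eq_subst _ (by simp [hy]), binomPow_eq_subst _ (by simp),
    subst_comp_subst_apply (.of_constantCoeff_zero' (by simp)) hs, ← coe_substAlgHom hs, map_neg,
    coe_substAlgHom hs, subst_X hs]

lemma coeff_binomPow_neg_X (σ : K) (n : ℕ) :
    coeff n (binomPow σ (-X)) = (-1) ^ n * Ring.choose σ n := by
  rw [binomPow_eq_subst _ (by simp), ← neg_one_smul K X, ← rescale_eq_subst, coeff_rescale,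
    binomialSeries_coeff, smul_eq_mul, mul_one]

end Binomial

section Lambert

variable {K : Type*} [Field K] [CharZero K]

def lambertSeries (τ : K) : K⟦X⟧ :=
  mk fun n => (∏ a ∈ Finset.range n, ((n : K) * τ + (a : K))) / (n.factorial : K)

lemma coeff_lambertSeries (τ : K) (n : ℕ) :
    coeff n (lambertSeries τ) = (-1) ^ n * Ring.choose (-(n * τ)) n := by
  rw [lambertSeries, coeff_mk, Ring.choose_eq_prod_div, mul_div_assoc',
    show (-1 : K) ^ n = ∏ _a ∈ Finset.range n, (-1 : K) by simp, ← Finset.prod_mul_distrib]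
  congr 1
  exact Finset.prod_congr rfl fun a _ => by ring

variable (τ : K) {y : K⟦X⟧} (hy : constantCoeff y = 0) (hyw : y * binomPow τ (-y) = X)
include hy hyw

theorem lambertSeries_eq_binomPow_mul_derivative :
    lambertSeries τ = binomPow τ (-y) * d⁄dX K y := by
  ext n
  have hu : constantCoeff (-y) = 0 := by simp [hy]
  have hw : binomPow τ (-y) = binomPow (-(n * τ)) (-y) * binomPow τ (-y) ^ (n + 1) := by
    rw [← binomPow_natCast_mul _ _ hu, ← binomPow_add _ _ hu]
    congr 1
    push_cast; ring
  rw [hw, mul_assoc, binomPow_subst _ hy, coeff_subst_mul_pow_succ_mul_derivative hy hyw,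
    coeff_binomPow_neg_X, coeff_lambertSeries]

theorem lambertSeries_sub_one_mul :
    (lambertSeries τ - 1) * (1 - C (τ + 1) * y) = C τ * y := by
  have hu : constantCoeff (-y) = 0 := by simp [hy]
  have hderiv : d⁄dX K y * binomPow τ (-y)
      + y * (C τ * binomPow (τ - 1) (-y) * -d⁄dX K y) = 1 := by
    have h := congrArg (d⁄dX K) hyw
    simp only [Derivation.leibniz, smul_eq_mul, derivative_X, derivative_binomPow _ hu,
      map_neg] at h
    linear_combination h
  have hlower : binomPow (τ - 1) (-y) * (1 - y) = binomPow τ (-y) := by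
    rw [sub_eq_add_neg 1 y, ← binomPow_one hu, ← binomPow_add _ _ hu, sub_add_cancel]
  rw [lambertSeries_eq_binomPow_mul_derivative τ hy hyw, map_add, map_one]
  linear_combination (1 - y) * hderiv + C τ * y * d⁄dX K y * hlower

end Lambert

end PowerSeries

open PowerSeries

theorem inVar_eq_subst (v : Fin 2) (f : PowerSeries (RatFunc ℚ)) :
    inVar v f = f.subst (MvPowerSeries.X v) := by
  ext d
  rw [coeff_subst_single]
  show (if ∀ w, w ≠ v → d w = 0 then _ else _) = _
  congr 1
  refine propext ⟨fun h => Finsupp.ext fun w => ?_, fun h w hw => ?_⟩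
  · by_cases hw : w = v
    · subst hw; simp
    · simp [h w hw, Finsupp.single_eq_of_ne hw]
  · rw [h, Finsupp.single_eq_of_ne hw]

theorem coeff_lambertSeries_sub_one (τ : RatFunc ℚ) (n : ℕ) :
    coeff n (lambertSeries τ - 1) = if n = 0 then 0 else lambertCoeff τ n := by
  rcases n with _ | n
  · simp [lambertSeries]
  · simp [lambertSeries, lambertCoeff]

theorem eulerOp_C02 (τ : RatFunc ℚ) :
    eulerOp (C02 τ) = MvPowerSeries.C (-((τ + 1) / τ)) *
      ((lambertSeries τ - 1).subst (MvPowerSeries.X 0) *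
        (lambertSeries τ - 1).subst (MvPowerSeries.X 1)) := by
  ext d
  rw [MvPowerSeries.coeff_C_mul, coeff_subst_X_zero_subst_mul_X_one, coeff_lambertSeries_sub_one,
    coeff_lambertSeries_sub_one]
  show ((d 0 + d 1 : ℕ) : RatFunc ℚ) * C02 τ d = _
  rw [C02]
  by_cases h0 : d 0 = 0
  · simp [h0]
  by_cases h1 : d 1 = 0
  · simp [h1]
  have hd : ((d 0 + d 1 : ℕ) : RatFunc ℚ) ≠ 0 := by exact_mod_cast (by omega : d 0 + d 1 ≠ 0)
  rw [if_pos ⟨h0, h1⟩, if_neg h0, if_neg h1]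
  field_simp

theorem lambertSeries_sub_one_mul_inVar {y : PowerSeries (RatFunc ℚ)} (τ : RatFunc ℚ)
    (h0 : constantCoeff y = 0) (heq : y * binomPow τ (-y) = X) (v : Fin 2) :
    (lambertSeries τ - 1).subst (MvPowerSeries.X v) *
        (1 - MvPowerSeries.C (τ + 1) * inVar v y) = MvPowerSeries.C τ * inVar v y := by
  have h := lambertSeries_sub_one_mul τ h0 heq
  have hs : HasSubst (MvPowerSeries.X v : MvPowerSeries (Fin 2) (RatFunc ℚ)) := .X v
  generalize lambertSeries τ - 1 = F at h
  have := congrArg (substAlgHom hs) h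
  simp only [map_mul, map_sub, map_one, coe_substAlgHom, subst_C] at this
  rwa [inVar_eq_subst]

/-- If `y` solves `y(1-y)^τ = x` with `y(0)=0` (`τ = RatFunc.X`), then
`(x_1 ∂/∂x_1 + x_2 ∂/∂x_2) Ĉ_{0,2} = -τ(τ+1) y_1 y_2 /((1-(τ+1)y_1)(1-(τ+1)y_2))`,
stated after multiplying through by `(1-(τ+1)y_1)(1-(τ+1)y_2)`. -/
theorem c02_euler (y : PowerSeries (RatFunc ℚ))
    (h0 : PowerSeries.constantCoeff (R := RatFunc ℚ) y = 0)
    (heq : y * binomPow (RatFunc.X) (-y) = PowerSeries.X) :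
    eulerOp (C02 RatFunc.X) *
        ((1 - MvPowerSeries.C (σ := Fin 2) (R := RatFunc ℚ) (RatFunc.X + 1) * inVar 0 y) *
          (1 - MvPowerSeries.C (σ := Fin 2) (R := RatFunc ℚ) (RatFunc.X + 1) * inVar 1 y)) =
      MvPowerSeries.C (σ := Fin 2) (R := RatFunc ℚ) (-(RatFunc.X * (RatFunc.X + 1))) *
        (inVar 0 y * inVar 1 y) := by
  set τ : RatFunc ℚ := RatFunc.X
  have hτ : τ ≠ 0 := RatFunc.X_ne_zero
  have h := lambertSeries_sub_one_mul_inVar τ h0 heq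
  rw [eulerOp_C02]
  calc _ = MvPowerSeries.C (-((τ + 1) / τ)) *
        (((lambertSeries τ - 1).subst (MvPowerSeries.X 0) *
          (1 - MvPowerSeries.C (τ + 1) * inVar 0 y)) *
        ((lambertSeries τ - 1).subst (MvPowerSeries.X 1) *
          (1 - MvPowerSeries.C (τ + 1) * inVar 1 y))) := by ring
    _ = MvPowerSeries.C (-((τ + 1) / τ) * τ * τ) * (inVar 0 y * inVar 1 y) := by
      rw [h 0, h 1, map_mul, map_mul]; ring
    _ = _ := by congr 2; field_simp
end
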